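/- arXiv:2107.08082 — 5 statements merged into one kernel-verified Lean document; each statement's English description precedes it below -/
import Mathlib

section
/- Let P be a locally finite poset that is not an antichain (i.e. there exist x < y in P), R a nonzero commutative unital ring and n ≥ 3. Then I^n(P,R) is not third-power associative: there exists f ∈ I^n(P,R) with f·(f·f) ≠ (f·f)·f. Concretely, f = e_{(x,…,x)} + e_{(x,…,x,y)} + e_{(x,…,x,y,y)} (with n, n−1 and n−2 copies of x respectively) satisfies f·(f·f) ≠ (f·f)·f. -/
/-- Partial `n`-flags: chains `x_1 ≤ … ≤ x_n` in the poset `P`. -/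
abbrev FlagN (P : Type*) [PartialOrder P] (n : ℕ) : Type _ := {x : Fin n → P // Monotone x}

/-- `ell x y` is the length of the interval `[x,y]`, i.e. the maximal cardinality of a
chain in `[x,y]` minus one. -/
noncomputable def ell {P : Type*} [PartialOrder P] (x y : P) : ℕ∞ :=
  (Set.Icc x y).chainHeight (· < ·) - 1

section Mono

variable {P : Type*} [PartialOrder P]

lemma sandwich_mono {m : ℕ} {x : Fin (m + 1) → P} (hx : Monotone x) {y : Fin m → P}
    (hy : ∀ i, x i.castSucc ≤ y i ∧ y i ≤ x i.succ) : Monotone y := by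
  intro i j hij
  rcases eq_or_lt_of_le hij with rfl | h
  · exact le_rfl
  · have h1 : (i.succ : Fin (m + 1)) ≤ j.castSucc := by
      rw [Fin.le_def, Fin.val_succ, Fin.coe_castSucc]
      exact h
    exact ((hy i).2.trans (hx h1)).trans (hy j).1

lemma cons_mono' {m : ℕ} {a : P} {w : Fin (m + 1) → P} (hw : Monotone w) (ha : a ≤ w 0) :
    Monotone (Fin.cons a w) := by
  intro s t hst
  rcases Fin.eq_zero_or_eq_succ s with rfl | ⟨i, rfl⟩
  · rcases Fin.eq_zero_or_eq_succ t with rfl | ⟨j, rfl⟩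
    · exact le_rfl
    · simp only [Fin.cons_zero, Fin.cons_succ]
      exact ha.trans (hw (Fin.zero_le _))
  · rcases Fin.eq_zero_or_eq_succ t with rfl | ⟨j, rfl⟩
    · exact absurd (Fin.le_zero_iff.mp hst) (Fin.succ_ne_zero i)
    · simp only [Fin.cons_succ]
      exact hw (Fin.succ_le_succ_iff.mp hst)

lemma snoc_mono' {m : ℕ} {w : Fin (m + 1) → P} (hw : Monotone w) {b : P}
    (hb : w (Fin.last m) ≤ b) : Monotone (Fin.snoc w b) := by
  intro s t hst
  rcases Fin.eq_castSucc_or_eq_last s with ⟨i, rfl⟩ | rfl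
  · rcases Fin.eq_castSucc_or_eq_last t with ⟨j, rfl⟩ | rfl
    · simp only [Fin.snoc_castSucc]
      exact hw (Fin.castSucc_le_castSucc_iff.mp hst)
    · simp only [Fin.snoc_castSucc, Fin.snoc_last]
      exact (hw (Fin.le_last i)).trans hb
  · rcases Fin.eq_castSucc_or_eq_last t with ⟨j, rfl⟩ | rfl
    · exact absurd hst (not_le.mpr (Fin.castSucc_lt_last j))
    · exact le_rfl

lemma cons_sandwich_mono {m : ℕ} {x : Fin (m + 1) → P} (hx : Monotone x) {y : Fin m → P}
    (hy : ∀ i, x i.castSucc ≤ y i ∧ y i ≤ x i.succ) {a : P} (ha : a ≤ x 0) :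
    Monotone (Fin.cons a y) := by
  intro s t hst
  rcases Fin.eq_zero_or_eq_succ s with rfl | ⟨i, rfl⟩
  · rcases Fin.eq_zero_or_eq_succ t with rfl | ⟨j, rfl⟩
    · exact le_rfl
    · simp only [Fin.cons_zero, Fin.cons_succ]
      exact ha.trans ((hx (Fin.zero_le _)).trans (hy j).1)
  · rcases Fin.eq_zero_or_eq_succ t with rfl | ⟨j, rfl⟩
    · exact absurd (Fin.le_zero_iff.mp hst) (Fin.succ_ne_zero i)
    · simp only [Fin.cons_succ]
      exact sandwich_mono hx hy (Fin.succ_le_succ_iff.mp hst)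

lemma snoc_sandwich_mono {m : ℕ} {x : Fin (m + 1) → P} (hx : Monotone x) {y : Fin m → P}
    (hy : ∀ i, x i.castSucc ≤ y i ∧ y i ≤ x i.succ) {b : P} (hb : x (Fin.last m) ≤ b) :
    Monotone (Fin.snoc y b) := by
  intro s t hst
  rcases Fin.eq_castSucc_or_eq_last s with ⟨i, rfl⟩ | rfl
  · rcases Fin.eq_castSucc_or_eq_last t with ⟨j, rfl⟩ | rfl
    · simp only [Fin.snoc_castSucc]
      exact sandwich_mono hx hy (Fin.castSucc_le_castSucc_iff.mp hst)
    · simp only [Fin.snoc_castSucc, Fin.snoc_last]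
      exact (hy i).2.trans ((hx (Fin.le_last _)).trans hb)
  · rcases Fin.eq_castSucc_or_eq_last t with ⟨j, rfl⟩ | rfl
    · exact absurd hst (not_le.mpr (Fin.castSucc_lt_last j))
    · exact le_rfl

lemma cons_snoc_sandwich_mono {m : ℕ} {x : Fin (m + 1) → P} (hx : Monotone x) {z : Fin m → P}
    (hz : ∀ i, x i.castSucc ≤ z i ∧ z i ≤ x i.succ) {a b : P} (ha : a ≤ x 0)
    (hb : x (Fin.last m) ≤ b) : Monotone (Fin.cons a (Fin.snoc z b)) := by
  refine cons_mono' (snoc_sandwich_mono hx hz hb) ?_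
  cases m with
  | zero =>
      rw [show (0 : Fin 1) = Fin.last 0 from rfl, Fin.snoc_last]
      exact ha.trans hb
  | succ m' =>
      rw [show (0 : Fin (m' + 2)) = (0 : Fin (m' + 1)).castSucc from rfl, Fin.snoc_castSucc]
      exact ha.trans ((hx (Fin.zero_le _)).trans (hz 0).1)

end Mono

section PreDefs

variable (P R : Type*) [PartialOrder P] [LocallyFiniteOrder P] [CommRing R]

/-- The multiplication of the partial flag incidence algebra `I^n(P,R)`, `n = m+1`. -/
def mulN {m : ℕ} (f g : FlagN P (m + 1) → R) : FlagN P (m + 1) → R := fun x =>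
  ∑ y ∈ (Fintype.piFinset fun i : Fin m =>
      Finset.Icc (x.1 i.castSucc) (x.1 i.succ)).attach,
    f ⟨Fin.cons (x.1 0) y.1, cons_sandwich_mono x.2
        (fun i => by
          have := Fintype.mem_piFinset.mp y.2 i
          rwa [Finset.mem_Icc] at this) le_rfl⟩ *
    g ⟨Fin.snoc y.1 (x.1 (Fin.last m)), snoc_sandwich_mono x.2
        (fun i => by
          have := Fintype.mem_piFinset.mp y.2 i
          rwa [Finset.mem_Icc] at this) le_rfl⟩

variable {P}

/-- The standard basis element `e_t` of `I^n(P,R)`. -/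
def eN [DecidableEq P] {n : ℕ} (t0 : FlagN P n) : FlagN P n → R := fun t => if t = t0 then 1 else 0

variable (P)

/-- The ideal `J^n_k(P,R)` of functions vanishing on flags `(x_1,…,x_n)` with `l(x_1,x_n) < k`. -/
def JN (m k : ℕ) : Submodule R (FlagN P (m + 1) → R) where
  carrier := {f | ∀ t : FlagN P (m + 1), ell (t.1 0) (t.1 (Fin.last m)) < (k : ℕ∞) → f t = 0}
  add_mem' := by
    intro f g hf hg t ht
    simp only [Pi.add_apply, hf t ht, hg t ht, add_zero]
  zero_mem' := by intro t _; rfl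
  smul_mem' := by
    intro c f hf t ht
    simp only [Pi.smul_apply, hf t ht, smul_zero]

end PreDefs

/-!
Extend functions on flags by zero to all tuples `Fin n → P`. A tuple interlacing `w` forces `w` to
be monotone, so the product becomes the convolution `flagConv` over interlacing tuples, and
convolving with a basis element `e_a` on either side just evaluates at a shift of `a`.
Write `s_c` for the flag of `c` copies of `x` followed by copies of `y`, so that
`f = e_{s_n} + e_{s_{n-1}} + e_{s_{n-2}}`. At `s_{n-2}`, expanding the left factor gives
`f(ff) = (ff)(s_{n-2}) + (ff)(s_{n-3}) = 1 + 0`, while expanding the right factor gives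
`(ff)f = (ff)(s_{n-1}) = f(s_n) f(s_{n-1}) + f(s_{n-1}) f(s_{n-2}) = 2`.
-/

open Finset

section ExtendByZero

variable {P R : Type*} [PartialOrder P] {n : ℕ}

open Classical in
noncomputable def extendByZero [Zero R] (f : FlagN P n → R) (w : Fin n → P) : R :=
  if h : Monotone w then f ⟨w, h⟩ else 0

lemma extendByZero_add [AddZeroClass R] (f g : FlagN P n → R) :
    extendByZero (f + g) = extendByZero f + extendByZero g := by
  funext w
  by_cases hw : Monotone w <;> simp [extendByZero, hw]

lemma extendByZero_eN [CommRing R] [DecidableEq P] (t : FlagN P n) :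
    extendByZero (eN R t) = Pi.single t.1 1 := by
  funext w
  by_cases hw : Monotone w
  · simp [extendByZero, eN, hw, Pi.single_apply, Subtype.ext_iff]
  · have : w ≠ t.1 := fun h => hw (h ▸ t.2)
    simp [extendByZero, hw, this]

end ExtendByZero

section FlagConvolution

variable {P R : Type*} [PartialOrder P] [LocallyFiniteOrder P] [NonAssocSemiring R] {m : ℕ}

def interlacing (w : Fin (m + 1) → P) : Finset (Fin m → P) :=
  Fintype.piFinset fun i => Icc (w i.castSucc) (w i.succ)

lemma mem_interlacing {w : Fin (m + 1) → P} {v : Fin m → P} :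
    v ∈ interlacing w ↔ ∀ i, w i.castSucc ≤ v i ∧ v i ≤ w i.succ := by
  simp only [interlacing, Fintype.mem_piFinset, mem_Icc]

lemma monotone_of_mem_interlacing {w : Fin (m + 1) → P} {v : Fin m → P}
    (hv : v ∈ interlacing w) : Monotone w :=
  Fin.monotone_iff_le_succ.2 fun i => (mem_interlacing.1 hv i).1.trans (mem_interlacing.1 hv i).2

def flagConv (F G : (Fin (m + 1) → P) → R) (w : Fin (m + 1) → P) : R :=
  ∑ v ∈ interlacing w, F (Fin.cons (w 0) v) * G (Fin.snoc v (w (Fin.last m)))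

lemma flagConv_add_left (F₁ F₂ G : (Fin (m + 1) → P) → R) :
    flagConv (F₁ + F₂) G = flagConv F₁ G + flagConv F₂ G := by
  funext w
  simp only [flagConv, Pi.add_apply, add_mul, sum_add_distrib]

lemma flagConv_add_right (F G₁ G₂ : (Fin (m + 1) → P) → R) :
    flagConv F (G₁ + G₂) = flagConv F G₁ + flagConv F G₂ := by
  funext w
  simp only [flagConv, Pi.add_apply, mul_add, sum_add_distrib]

lemma flagConv_single_left [DecidableEq P] (a : Fin (m + 1) → P)
    (G : (Fin (m + 1) → P) → R) (w : Fin (m + 1) → P) :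
    flagConv (Pi.single a 1) G w =
      if a 0 = w 0 ∧ Fin.tail a ∈ interlacing w then
        G (Fin.snoc (Fin.tail a) (w (Fin.last m)))
      else 0 := by
  have hcons : ∀ v, Fin.cons (w 0) v = a ↔ a 0 = w 0 ∧ v = Fin.tail a := fun v => by
    conv_lhs => rw [← Fin.cons_self_tail a]
    rw [Fin.cons_inj, eq_comm]
  simp only [flagConv, Pi.single_apply, hcons, ite_and, ite_mul, one_mul, zero_mul]
  split_ifs <;> simp_all

lemma flagConv_single_right [DecidableEq P] (a : Fin (m + 1) → P)
    (F : (Fin (m + 1) → P) → R) (w : Fin (m + 1) → P) :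
    flagConv F (Pi.single a 1) w =
      if a (Fin.last m) = w (Fin.last m) ∧ Fin.init a ∈ interlacing w then
        F (Fin.cons (w 0) (Fin.init a))
      else 0 := by
  have hsnoc : ∀ v, Fin.snoc v (w (Fin.last m)) = a ↔
      a (Fin.last m) = w (Fin.last m) ∧ v = Fin.init a := fun v => by
    conv_lhs => rw [← Fin.snoc_init_self a]
    rw [Fin.snoc_inj, and_comm, @eq_comm _ v, @eq_comm _ (w _)]
  simp only [flagConv, Pi.single_apply, hsnoc, ite_and, mul_ite, mul_one, mul_zero]
  split_ifs <;> simp_all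

end FlagConvolution

lemma extendByZero_mulN {P R : Type*} [PartialOrder P] [LocallyFiniteOrder P] [CommRing R]
    {m : ℕ} (f g : FlagN P (m + 1) → R) :
    extendByZero (mulN P R f g) = flagConv (extendByZero f) (extendByZero g) := by
  funext w
  by_cases hw : Monotone w
  · rw [extendByZero, dif_pos hw, mulN, flagConv, ← sum_attach (interlacing w)]
    refine sum_congr rfl fun v _ => ?_
    rw [extendByZero, extendByZero, dif_pos, dif_pos]
  · rw [extendByZero, dif_neg hw, flagConv, sum_eq_zero]
    exact fun v hv => absurd (monotone_of_mem_interlacing hv) hw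

section StepFlag

variable {P : Type*} {x y : P} {n c d : ℕ}

def stepFlag (x y : P) (n c : ℕ) : Fin n → P := fun i => if (i : ℕ) < c then x else y

lemma stepFlag_of_le (h : n ≤ c) : stepFlag x y n c = fun _ => x :=
  funext fun i => if_pos (i.2.trans_le h)

lemma stepFlag_zero (h : 0 < c) : stepFlag x y (n + 1) c 0 = x :=
  if_pos h

lemma stepFlag_last (h : c ≤ n) : stepFlag x y (n + 1) c (Fin.last n) = y :=
  if_neg (by simpa using h)

lemma stepFlag_last_self : stepFlag x y (n + 1) (n + 1) (Fin.last n) = x :=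
  if_pos (by simp)

lemma tail_stepFlag : Fin.tail (stepFlag x y (n + 1) (c + 1)) = stepFlag x y n c :=
  funext fun i => by simp [Fin.tail, stepFlag]

lemma init_stepFlag : Fin.init (stepFlag x y (n + 1) c) = stepFlag x y n c :=
  funext fun i => by simp [Fin.init, stepFlag]

lemma cons_stepFlag : Fin.cons x (stepFlag x y n c) = stepFlag x y (n + 1) (c + 1) := by
  conv_rhs => rw [← Fin.cons_self_tail (stepFlag x y (n + 1) (c + 1)), stepFlag_zero c.succ_pos,
    tail_stepFlag]

lemma snoc_stepFlag (h : c ≤ n) : Fin.snoc (stepFlag x y n c) y = stepFlag x y (n + 1) c := by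
  conv_rhs => rw [← Fin.snoc_init_self (stepFlag x y (n + 1) c), stepFlag_last h, init_stepFlag]

lemma stepFlag_inj (hxy : x ≠ y) (hc : c ≤ n) (hd : d ≤ n) :
    stepFlag x y n c = stepFlag x y n d ↔ c = d := by
  refine ⟨fun h => ?_, fun h => h ▸ rfl⟩
  by_contra hcd
  have key := congrFun h ⟨min c d, by omega⟩
  rcases Nat.lt_or_gt_of_ne hcd with hlt | hlt
  · simp [stepFlag, hlt, hlt.le] at key
    exact hxy key.symm
  · simp [stepFlag, hlt, hlt.le] at key
    exact hxy key

lemma stepFlag_mem_interlacing_iff [PartialOrder P] [LocallyFiniteOrder P] (hxy : x < y)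
    (hd : d ≤ n) (hc : c ≤ n + 1) :
    stepFlag x y n d ∈ interlacing (stepFlag x y (n + 1) c) ↔ d ≤ c ∧ c ≤ d + 1 := by
  simp only [mem_interlacing, stepFlag, Fin.val_castSucc, Fin.val_succ]
  constructor
  · intro h
    constructor
    · by_contra! hcd
      have := (h ⟨c, by omega⟩).1
      simp [hcd] at this
      exact hxy.not_ge this
    · by_contra! hcd
      have := (h ⟨d, by omega⟩).2
      simp [show d + 1 < c by omega] at this
      exact hxy.not_ge this
  · rintro ⟨hdc, hcd⟩ i
    constructor <;> split_ifs <;> first | exact le_rfl | exact hxy.le | omega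

end StepFlag

section ThreeStep

variable {P R : Type*} [DecidableEq P] {x y : P} {k c : ℕ}

def threeStepIndicator (R : Type*) [AddMonoidWithOne R] (x y : P) (k : ℕ) :
    (Fin (k + 3) → P) → R :=
  Pi.single (stepFlag x y (k + 3) (k + 3)) 1 + Pi.single (stepFlag x y (k + 3) (k + 2)) 1 +
    Pi.single (stepFlag x y (k + 3) (k + 1)) 1

lemma threeStepIndicator_stepFlag [AddMonoidWithOne R] (hxy : x ≠ y) (hc : c ≤ k + 3) :
    threeStepIndicator R x y k (stepFlag x y (k + 3) c) = if k + 1 ≤ c then 1 else 0 := by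
  simp only [threeStepIndicator, Pi.add_apply, Pi.single_apply, stepFlag_inj hxy hc le_rfl,
    stepFlag_inj hxy hc (by omega : k + 2 ≤ k + 3),
    stepFlag_inj hxy hc (by omega : k + 1 ≤ k + 3)]
  split_ifs <;> first | omega | norm_num

variable [PartialOrder P] [LocallyFiniteOrder P] [NonAssocSemiring R]

lemma flagConv_threeStepIndicator (hxy : x < y) (G : (Fin (k + 3) → P) → R) (hc : c ≤ k + 2) :
    flagConv G (threeStepIndicator R x y k) (stepFlag x y (k + 3) c) =
      (if c = k + 2 then G (stepFlag x y (k + 3) (k + 3)) else 0) +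
        if k + 1 ≤ c then G (stepFlag x y (k + 3) (k + 2)) else 0 := by
  simp only [threeStepIndicator, flagConv_add_right, Pi.add_apply, flagConv_single_right,
    init_stepFlag, stepFlag_last hc, stepFlag_last (le_refl (k + 2)),
    stepFlag_last (by omega : k + 1 ≤ k + 2), stepFlag_last_self, hxy.ne, false_and, if_false,
    zero_add, true_and,
    stepFlag_mem_interlacing_iff hxy (le_refl (k + 2)) (by omega : c ≤ k + 2 + 1),
    stepFlag_mem_interlacing_iff hxy (by omega : k + 1 ≤ k + 2) (by omega : c ≤ k + 2 + 1)]
  obtain rfl | rfl | hck : c = k + 2 ∨ c = k + 1 ∨ c ≤ k := by omega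
  · simp [stepFlag_zero (by omega : 0 < k + 2), cons_stepFlag]
  · simp [stepFlag_zero (by omega : 0 < k + 1), cons_stepFlag]
  · simp [show ¬k + 1 ≤ c by omega, show ¬k + 2 ≤ c by omega, show c ≠ k + 2 by omega]

lemma threeStepIndicator_flagConv (hxy : x < y) (G : (Fin (k + 3) → P) → R) :
    flagConv (threeStepIndicator R x y k) G (stepFlag x y (k + 3) (k + 1)) =
      G (stepFlag x y (k + 3) (k + 1)) + G (stepFlag x y (k + 3) k) := by
  simp only [threeStepIndicator, flagConv_add_left, Pi.add_apply, flagConv_single_left,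
    tail_stepFlag, stepFlag_zero (by omega : 0 < k + 3), stepFlag_zero (by omega : 0 < k + 2),
    stepFlag_zero (by omega : 0 < k + 1), stepFlag_last (by omega : k + 1 ≤ k + 2),
    snoc_stepFlag (by omega : k + 1 ≤ k + 2), snoc_stepFlag (by omega : k ≤ k + 2),
    stepFlag_mem_interlacing_iff hxy (le_refl (k + 2)) (by omega : k + 1 ≤ k + 2 + 1),
    stepFlag_mem_interlacing_iff hxy (by omega : k + 1 ≤ k + 2) (by omega : k + 1 ≤ k + 2 + 1),
    stepFlag_mem_interlacing_iff hxy (by omega : k ≤ k + 2) (by omega : k + 1 ≤ k + 2 + 1)]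
  simp

end ThreeStep

/-- If `P` is not an antichain and `R ≠ 0`, then `I^n(P,R)` (`n = k+3 ≥ 3`)
is not third-power associative; concretely `f = e_{x^n} + e_{(x^{n-1},y)} + e_{(x^{n-2},y,y)}`
satisfies `f(ff) ≠ (ff)f`. -/
theorem not_third_power_associative
    {P R : Type*} [PartialOrder P] [LocallyFiniteOrder P] [DecidableEq P]
    [CommRing R] [Nontrivial R]
    (k : ℕ) (x y : P) (hxy : x < y) (f : FlagN P (k + 3) → R)
    (hf : f =
      eN R (⟨fun _ => x, monotone_const⟩ : FlagN P (k + 3)) +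
      eN R (⟨Fin.snoc (fun _ : Fin (k + 2) => x) y,
        snoc_mono' monotone_const hxy.le⟩ : FlagN P (k + 3)) +
      eN R (⟨Fin.snoc (Fin.snoc (fun _ : Fin (k + 1) => x) y) y,
        snoc_mono' (snoc_mono' monotone_const hxy.le)
          (by rw [Fin.snoc_last])⟩ : FlagN P (k + 3))) :
    mulN P R f (mulN P R f f) ≠ mulN P R (mulN P R f f) f := by
  have hF : extendByZero f = threeStepIndicator R x y k := by
    rw [hf, extendByZero_add, extendByZero_add, extendByZero_eN, extendByZero_eN, extendByZero_eN]
    simp only [← stepFlag_of_le (x := x) (y := y) (le_refl (k + 3)),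
      ← stepFlag_of_le (x := x) (y := y) (le_refl (k + 2)),
      ← stepFlag_of_le (x := x) (y := y) (le_refl (k + 1)), snoc_stepFlag le_rfl,
      snoc_stepFlag (Nat.le_succ (k + 1)), threeStepIndicator]
  have hsq : ∀ c ≤ k + 2, extendByZero (mulN P R f f) (stepFlag x y (k + 3) c) =
      (if c = k + 2 then 1 else 0) + if k + 1 ≤ c then 1 else 0 := by
    intro c hc
    rw [extendByZero_mulN, hF, flagConv_threeStepIndicator hxy _ hc,
      threeStepIndicator_stepFlag hxy.ne le_rfl, threeStepIndicator_stepFlag hxy.ne (by omega)]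
    simp
  intro h
  have hcube := congrFun (congrArg extendByZero h) (stepFlag x y (k + 3) (k + 1))
  rw [extendByZero_mulN f, extendByZero_mulN (mulN P R f f) f, hF, threeStepIndicator_flagConv hxy,
    flagConv_threeStepIndicator hxy _ (by omega), hsq _ (by omega), hsq _ (by omega),
    hsq _ le_rfl] at hcube
  norm_num at hcube
  exact one_ne_zero (by linear_combination -hcube : (1 : R) = 0)
end

section
/- Let P be a locally finite poset, R a commutative unital ring, n ≥ 2 and k ≥ 0. Then the R-submodule J^n_k(P,R) = {f ∈ I^n(P,R) : f(x_1,…,x_n) = 0 whenever l(x_1,x_n) < k} is a two-sided ideal of I^n(P,R), i.e. for every f ∈ J^n_k(P,R) and g ∈ I^n(P,R) both fg and gf lie in J^n_k(P,R). -/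
/-! Every term of `(f g)(x_1, …, x_n)` evaluates `f` and `g` at flags whose first and last entries
lie in `[x_1, x_n]`. The length of an interval only grows with the interval, so each of these flags
spans an interval of length `< k` whenever `[x_1, x_n]` does, and the factor from `J^n_k` vanishes. -/

section FlagIdeal

variable {P R : Type*} [PartialOrder P]

lemma ell_le_ell_of_le {a b x y : P} (hxa : x ≤ a) (hby : b ≤ y) : ell a b ≤ ell x y :=
  tsub_le_tsub_right (Set.chainHeight_mono _ _ _ (Set.Icc_subset_Icc hxa hby)) 1

lemma sandwich_mem_Icc {m : ℕ} {x : Fin (m + 1) → P} (hx : Monotone x) {y : Fin m → P}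
    (hy : ∀ i, x i.castSucc ≤ y i ∧ y i ≤ x i.succ) (i : Fin m) :
    x 0 ≤ y i ∧ y i ≤ x (Fin.last m) :=
  ⟨(hx (Fin.zero_le _)).trans (hy i).1, (hy i).2.trans (hx (Fin.le_last _))⟩

lemma cons_le_last {m : ℕ} {x : Fin (m + 1) → P} (hx : Monotone x) {y : Fin m → P}
    (hy : ∀ i, x i.castSucc ≤ y i ∧ y i ≤ x i.succ) (j : Fin (m + 1)) :
    (Fin.cons (x 0) y : Fin (m + 1) → P) j ≤ x (Fin.last m) := by
  refine Fin.cases ?_ (fun i => ?_) j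
  · exact hx (Fin.zero_le _)
  · simpa only [Fin.cons_succ] using (sandwich_mem_Icc hx hy i).2

lemma zero_le_snoc {m : ℕ} {x : Fin (m + 1) → P} (hx : Monotone x) {y : Fin m → P}
    (hy : ∀ i, x i.castSucc ≤ y i ∧ y i ≤ x i.succ) (j : Fin (m + 1)) :
    x 0 ≤ (Fin.snoc y (x (Fin.last m)) : Fin (m + 1) → P) j := by
  refine Fin.lastCases ?_ (fun i => ?_) j
  · simpa only [Fin.snoc_last] using hx (Fin.zero_le _)
  · simpa only [Fin.snoc_castSucc] using (sandwich_mem_Icc hx hy i).1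

variable [CommRing R]

lemma apply_eq_zero_of_mem_JN {m k : ℕ} {f : FlagN P (m + 1) → R} (hf : f ∈ JN P R m k)
    {x : FlagN P (m + 1)} (hx : ell (x.1 0) (x.1 (Fin.last m)) < k) (s : FlagN P (m + 1))
    (h0 : x.1 0 ≤ s.1 0) (hlast : s.1 (Fin.last m) ≤ x.1 (Fin.last m)) : f s = 0 :=
  hf s ((ell_le_ell_of_le h0 hlast).trans_lt hx)

variable [LocallyFiniteOrder P]

lemma sandwich_of_mem_piFinset {m : ℕ} {x : Fin (m + 1) → P} {y : Fin m → P}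
    (hy : y ∈ Fintype.piFinset fun i : Fin m => Finset.Icc (x i.castSucc) (x i.succ)) :
    ∀ i, x i.castSucc ≤ y i ∧ y i ≤ x i.succ := fun i =>
  Finset.mem_Icc.mp (Fintype.mem_piFinset.mp hy i)

lemma mulN_apply_eq_zero_of_left {m : ℕ} {f : FlagN P (m + 1) → R} (g : FlagN P (m + 1) → R)
    {x : FlagN P (m + 1)}
    (hf : ∀ s : FlagN P (m + 1), x.1 0 ≤ s.1 0 → s.1 (Fin.last m) ≤ x.1 (Fin.last m) → f s = 0) :
    mulN P R f g x = 0 := by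
  refine Finset.sum_eq_zero fun y _ => ?_
  refine mul_eq_zero_of_left (hf _ ?_ ?_) _
  · exact le_rfl
  · exact cons_le_last x.2 (sandwich_of_mem_piFinset y.2) (Fin.last m)

lemma mulN_apply_eq_zero_of_right {m : ℕ} (f : FlagN P (m + 1) → R) {g : FlagN P (m + 1) → R}
    {x : FlagN P (m + 1)}
    (hg : ∀ s : FlagN P (m + 1), x.1 0 ≤ s.1 0 → s.1 (Fin.last m) ≤ x.1 (Fin.last m) → g s = 0) :
    mulN P R f g x = 0 := by
  refine Finset.sum_eq_zero fun y _ => ?_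
  refine mul_eq_zero_of_right _ (hg _ ?_ (Fin.snoc_last (α := fun _ => P) _ _).le)
  exact zero_le_snoc x.2 (sandwich_of_mem_piFinset y.2) _

end FlagIdeal

theorem JN_is_ideal_general
    {P R : Type*} [PartialOrder P] [LocallyFiniteOrder P] [CommRing R]
    (m : ℕ) (k : ℕ)
    (f g : FlagN P (m + 1) → R) (hf : f ∈ JN P R m k) :
    mulN P R f g ∈ JN P R m k ∧ mulN P R g f ∈ JN P R m k :=
  ⟨fun _ hx => mulN_apply_eq_zero_of_left g (apply_eq_zero_of_mem_JN hf hx),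
    fun _ hx => mulN_apply_eq_zero_of_right g (apply_eq_zero_of_mem_JN hf hx)⟩

/-- For `n = m+1 ≥ 2` and `k ≥ 0`, the submodule `J^n_k(P,R)` is a
two-sided ideal of `I^n(P,R)`. -/
theorem JN_is_ideal
    {P R : Type*} [PartialOrder P] [LocallyFiniteOrder P] [CommRing R]
    (m : ℕ) (hm : 1 ≤ m) (k : ℕ)
    (f g : FlagN P (m + 1) → R) (hf : f ∈ JN P R m k) :
    mulN P R f g ∈ JN P R m k ∧ mulN P R g f ∈ JN P R m k :=
  JN_is_ideal_general m k f g hf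
end

section
/- Let P be a finite poset, R a commutative unital ring and n ≥ 2. The quotient algebra I^n(P,R)/J^n_1(P,R) is isomorphic as an R-algebra to the direct product ∏_{x ∈ P} R of |P| copies of R (with coordinatewise operations). -/
/-!
A flag `x_1 ≤ ⋯ ≤ x_n` with `l(x_1, x_n) = 0` has `x_1 = x_n` and is therefore constant, so
`J^n_1(P,R)` is the kernel of the surjective restriction `f ↦ (p ↦ f(p,…,p))` to constant flags.
This restriction is multiplicative because over a constant flag the only intermediate chain is
the constant one, so `(fg)(p,…,p) = f(p,…,p) g(p,…,p)`.
-/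

section Length

variable {P : Type*} [PartialOrder P]

lemma chainHeight_Icc_le_one_iff {x y : P} :
    (Set.Icc x y).chainHeight (· < ·) ≤ 1 ↔ ¬ x < y := by
  constructor
  · intro h hxy
    have hpair : ({x, y} : Set P).encard ≤ (Set.Icc x y).chainHeight (· < ·) :=
      Set.encard_le_chainHeight_of_isChain _ _
        (Set.insert_subset (Set.left_mem_Icc.2 hxy.le)
          (Set.singleton_subset_iff.2 (Set.right_mem_Icc.2 hxy.le))) (.pair hxy)
    rw [Set.encard_pair hxy.ne] at hpair
    exact absurd (hpair.trans h) (by decide)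
  · intro hxy
    refine (Set.chainHeight_le_encard _ _).trans (Set.encard_le_one_iff.2 fun a b ha hb => ?_)
    exact (ha.1.eq_of_not_lt fun h => hxy (h.trans_le ha.2)).symm.trans
      (hb.1.eq_of_not_lt fun h => hxy (h.trans_le hb.2))

lemma ell_lt_one_iff {x y : P} : ell x y < 1 ↔ ¬ x < y := by
  rw [Order.lt_one_iff, ell, tsub_eq_zero_iff_le, chainHeight_Icc_le_one_iff]

end Length

namespace FlagN

variable {P : Type*} [PartialOrder P]

def const (n : ℕ) (p : P) : FlagN P n := ⟨fun _ => p, monotone_const⟩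

lemma const_injective (m : ℕ) : Function.Injective (const (P := P) (m + 1)) :=
  fun _ _ h => congrFun (congrArg Subtype.val h) 0

lemma eq_const_of_head_eq_last {m : ℕ} (t : FlagN P (m + 1)) (h : t.1 0 = t.1 (Fin.last m)) :
    t = const (m + 1) (t.1 0) :=
  Subtype.ext <| funext fun i =>
    le_antisymm (h ▸ t.2 (Fin.le_last i)) (t.2 (Fin.zero_le i))

lemma ell_head_last_lt_one_iff {m : ℕ} (t : FlagN P (m + 1)) :
    ell (t.1 0) (t.1 (Fin.last m)) < 1 ↔ t = const (m + 1) (t.1 0) := by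
  rw [ell_lt_one_iff, LE.le.not_lt_iff_eq (t.2 (Fin.zero_le _))]
  refine ⟨eq_const_of_head_eq_last t, fun h => ?_⟩
  rw [h]
  rfl

end FlagN

section Diagonal

variable {P R : Type*} [PartialOrder P] [CommRing R]

lemma mem_JN_one_iff {m : ℕ} {f : FlagN P (m + 1) → R} :
    f ∈ JN P R m 1 ↔ ∀ p, f (FlagN.const (m + 1) p) = 0 := by
  refine ⟨fun hf p => hf _ ((FlagN.ell_head_last_lt_one_iff _).2 rfl), fun hf t ht => ?_⟩
  rw [Nat.cast_one, FlagN.ell_head_last_lt_one_iff] at ht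
  rw [ht]
  exact hf _

lemma JN_one_eq_ker_funLeft_const (m : ℕ) :
    JN P R m 1 = LinearMap.ker (LinearMap.funLeft R R (FlagN.const (P := P) (m + 1))) := by
  ext f
  simp only [mem_JN_one_iff, LinearMap.mem_ker, funext_iff, LinearMap.funLeft_apply,
    Pi.zero_apply]

lemma mulN_const [LocallyFiniteOrder P] {m : ℕ} (f g : FlagN P (m + 1) → R) (p : P) :
    mulN P R f g (FlagN.const (m + 1) p) =
      f (FlagN.const (m + 1) p) * g (FlagN.const (m + 1) p) := by
  have hchain : ∀ y ∈ Fintype.piFinset fun _ : Fin m => Finset.Icc p p, y = fun _ => p := by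
    simp [funext_iff]
  calc mulN P R f g (FlagN.const (m + 1) p)
      = ∑ _y ∈ (Fintype.piFinset fun _ : Fin m => Finset.Icc p p).attach,
          f (FlagN.const (m + 1) p) * g (FlagN.const (m + 1) p) :=
        Finset.sum_congr rfl fun ⟨y, hy⟩ _ => by
          obtain rfl := hchain y hy
          congr 2 <;> apply Subtype.ext
          exacts [Fin.cons_self_tail (fun _ : Fin (m + 1) => p),
            Fin.snoc_init_self (fun _ : Fin (m + 1) => p)]
    _ = f (FlagN.const (m + 1) p) * g (FlagN.const (m + 1) p) := by
        simp

end Diagonal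

theorem quotient_by_JN_one_iso_pi_general
    {P R : Type*} [PartialOrder P] [LocallyFiniteOrder P]
    [CommRing R] (m : ℕ) :
    ∃ Φ : ((FlagN P (m + 1) → R) ⧸ JN P R m 1) ≃ₗ[R] (P → R),
      ∀ f g : FlagN P (m + 1) → R,
        Φ (Submodule.Quotient.mk (mulN P R f g)) =
          Φ (Submodule.Quotient.mk f) * Φ (Submodule.Quotient.mk g) := by
  let restrictToConst := LinearMap.funLeft R R (FlagN.const (P := P) (m + 1))
  have hsurj : Function.Surjective restrictToConst :=
    LinearMap.funLeft_surjective_of_injective _ _ _ (FlagN.const_injective m)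
  refine ⟨(Submodule.quotEquivOfEq _ _ (JN_one_eq_ker_funLeft_const m)).trans
    (restrictToConst.quotKerEquivOfSurjective hsurj), fun f g => ?_⟩
  funext p
  exact mulN_const f g p

/-- For a finite poset `P` and `n = m+1 ≥ 2`, the quotient algebra
`I^n(P,R)/J^n_1(P,R)` is isomorphic, as an `R`-algebra, to the direct product
`∏_{x ∈ P} R` with coordinatewise operations. -/
theorem quotient_by_JN_one_iso_pi
    {P R : Type*} [PartialOrder P] [Fintype P] [DecidableEq P] [LocallyFiniteOrder P]
    [CommRing R] (m : ℕ) (hm : 1 ≤ m) :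
    ∃ Φ : ((FlagN P (m + 1) → R) ⧸ JN P R m 1) ≃ₗ[R] (P → R),
      ∀ f g : FlagN P (m + 1) → R,
        Φ (Submodule.Quotient.mk (mulN P R f g)) =
          Φ (Submodule.Quotient.mk f) * Φ (Submodule.Quotient.mk g) :=
  quotient_by_JN_one_iso_pi_general m
end

section
/- Let P be a finite poset and R a commutative unital ring. Then the ideal J^3_1(P,R) coincides with the commutator submodule [I^3(P,R), I^3(P,R)], the R-span of all commutators [f,g] = fg − gf with f, g ∈ I^3(P,R). -/
/-- 3-flags (chains x ≤ y ≤ z) in a poset `P`. -/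
abbrev Flag3 (P : Type*) [PartialOrder P] : Type _ :=
  {t : P × P × P // t.1 ≤ t.2.1 ∧ t.2.1 ≤ t.2.2}

section PreDefs

variable (P R : Type*) [PartialOrder P] [LocallyFiniteOrder P] [CommRing R]

/-- The multiplication of the partial flag incidence algebra `I^3(P,R)`. -/
def mul3 : (Flag3 P → R) → (Flag3 P → R) → (Flag3 P → R) := fun f g t =>
  ∑ p ∈ ((Finset.Icc t.1.1 t.1.2.1) ×ˢ (Finset.Icc t.1.2.1 t.1.2.2)).attach,
    f ⟨(t.1.1, p.1.1, p.1.2), by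
        obtain ⟨h1, h2⟩ := Finset.mem_product.mp p.2
        rw [Finset.mem_Icc] at h1 h2
        exact ⟨h1.1, h1.2.trans h2.1⟩⟩ *
    g ⟨(p.1.1, p.1.2, t.1.2.2), by
        obtain ⟨h1, h2⟩ := Finset.mem_product.mp p.2
        rw [Finset.mem_Icc] at h1 h2
        exact ⟨h1.2.trans h2.1, h2.2⟩⟩

variable {P}

/-- The standard basis element `e_t` of `I^3(P,R)`. -/
def e3 [DecidableEq P] (t0 : Flag3 P) : Flag3 P → R := fun t => if t = t0 then 1 else 0

variable (P)

/-- The ideal `J^3_k(P,R)` of functions vanishing on flags `(x,y,z)` with `l(x,z) < k`. -/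
def J3 (k : ℕ) : Submodule R (Flag3 P → R) where
  carrier := {f | ∀ t : Flag3 P, ell t.1.1 t.1.2.2 < (k : ℕ∞) → f t = 0}
  add_mem' := by
    intro f g hf hg t ht
    simp only [Pi.add_apply, hf t ht, hg t ht, add_zero]
  zero_mem' := by intro t _; rfl
  smul_mem' := by
    intro c f hf t ht
    simp only [Pi.smul_apply, hf t ht, smul_zero]

/-- The commutator submodule `[U,V]`. -/
def commSub (U V : Submodule R (Flag3 P → R)) : Submodule R (Flag3 P → R) :=
  Submodule.span R {h | ∃ f ∈ U, ∃ g ∈ V, h = mul3 P R f g - mul3 P R g f}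

end PreDefs

/-! Since `l(x,z) < 1` iff `x = z`, `J^3_1` consists of the functions vanishing on the diagonal
flags `(x,x,x)`. A product is pointwise there, `(fg)(x,x,x) = f(x,x,x) g(x,x,x)`, so commutators
lie in `J^3_1`. Conversely, for `x ≠ z` the basis element `e(x,y,z)` is the commutator
`[e(x,y,y), e(y,y,z)]`, because `e(y,y,z) e(x,y,y) = 0`. -/

theorem ell_lt_one_iff_s4 {P : Type*} [PartialOrder P] {x z : P} (hxz : x ≤ z) :
    ell x z < 1 ↔ x = z := by
  rw [ell, Order.lt_one_iff, tsub_eq_zero_iff_le]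
  constructor
  · intro h
    by_contra hne
    have hsub : ({x, z} : Set P) ⊆ Set.Icc x z := by simp [Set.insert_subset_iff, hxz]
    have h2 := (Set.encard_le_chainHeight_of_isChain _ _ hsub (.pair (hxz.lt_of_ne hne))).trans h
    rw [Set.encard_pair hne] at h2
    exact absurd h2 (by decide)
  · rintro rfl
    rw [Set.Icc_self]
    exact (Set.chainHeight_le_encard _ _).trans (Set.encard_singleton x).le

namespace Flag3

variable {P : Type*} [PartialOrder P]

def diag (x : P) : Flag3 P := ⟨(x, x, x), le_rfl, le_rfl⟩

theorem eq_diag_of_fst_eq_last (t : Flag3 P) (h : t.1.1 = t.1.2.2) : t = diag t.1.1 := by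
  obtain ⟨⟨x, y, z⟩, hxy, hyz⟩ := t
  dsimp only at h
  subst h
  obtain rfl : y = x := le_antisymm hyz hxy
  rfl

end Flag3

section IncidenceAlgebra

variable {P R : Type*} [PartialOrder P] [LocallyFiniteOrder P] [CommRing R]

omit [LocallyFiniteOrder P] in
theorem mem_J3_one_iff {f : Flag3 P → R} :
    f ∈ J3 P R 1 ↔ ∀ x : P, f (Flag3.diag x) = 0 := by
  simp only [J3, Submodule.mem_mk, AddSubmonoid.mem_mk, AddSubsemigroup.mem_mk, Set.mem_ofPred_eq,
    Nat.cast_one]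
  refine ⟨fun hf x => hf _ ((ell_lt_one_iff_s4 le_rfl).mpr rfl), fun hf t ht => ?_⟩
  rw [ell_lt_one_iff_s4 (t.2.1.trans t.2.2)] at ht
  rw [t.eq_diag_of_fst_eq_last ht]
  exact hf _

theorem mul3_apply_diag (f g : Flag3 P → R) (x : P) :
    mul3 P R f g (Flag3.diag x) = f (Flag3.diag x) * g (Flag3.diag x) := by
  have hmem : (x, x) ∈ Finset.Icc x x ×ˢ Finset.Icc x x := by simp
  unfold mul3 Flag3.diag
  refine Finset.sum_eq_single_of_mem (M := R) ⟨(x, x), hmem⟩ (Finset.mem_attach _ _) ?_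
  rintro ⟨p, hp⟩ - hne
  simp only [Finset.Icc_self, Finset.singleton_product_singleton, Finset.mem_singleton] at hp
  exact absurd (Subtype.ext hp) hne

theorem mul3_sub_mul3_mem_J3_one (f g : Flag3 P → R) :
    mul3 P R f g - mul3 P R g f ∈ J3 P R 1 :=
  mem_J3_one_iff.mpr fun x => by simp only [Pi.sub_apply, mul3_apply_diag, mul_comm, sub_self]

variable [DecidableEq P]

omit [LocallyFiniteOrder P] in
theorem e3_eq_single (a : Flag3 P) : e3 R a = Pi.single a 1 :=
  funext fun t => (Pi.single_apply a 1 t).symm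

omit [LocallyFiniteOrder P] in
theorem e3_apply (a t : Flag3 P) : e3 R a t = if t.1 = a.1 then 1 else 0 := by
  simp only [e3, Subtype.ext_iff]

theorem mul3_e3_e3_apply (a b t : Flag3 P) :
    mul3 P R (e3 R a) (e3 R b) t =
      if t.1.1 = a.1.1 ∧ a.1.2 = (b.1.1, b.1.2.1) ∧ t.1.2.2 = b.1.2.2 ∧
        t.1.2.1 ∈ Finset.Icc a.1.2.1 a.1.2.2 then 1 else 0 := by
  obtain ⟨⟨a₁, a₂, a₃⟩, ha₁₂, ha₂₃⟩ := a
  obtain ⟨⟨b₁, b₂, b₃⟩, hb₁₂, hb₂₃⟩ := b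
  obtain ⟨⟨x, y, z⟩, hxy, hyz⟩ := t
  unfold mul3
  simp only [e3_apply]
  rw [Finset.sum_attach _ fun p : P × P =>
    (if (x, p.1, p.2) = (a₁, a₂, a₃) then (1 : R) else 0) *
      (if (p.1, p.2, z) = (b₁, b₂, b₃) then (1 : R) else 0)]
  simp only [Prod.mk.injEq, ite_zero_mul_ite_zero, one_mul]
  have hsupp : ∀ p : P × P, ((x = a₁ ∧ p.1 = a₂ ∧ p.2 = a₃) ∧ p.1 = b₁ ∧ p.2 = b₂ ∧ z = b₃) ↔
      (a₂, a₃) = p ∧ x = a₁ ∧ (a₂ = b₁ ∧ a₃ = b₂) ∧ z = b₃ := by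
    grind
  simp_rw [hsupp, ite_and, Finset.sum_ite_eq]
  -- given `x = a₁` and `a₃ = b₂ ≤ b₃ = z`, the flag inequalities reduce
  -- `(a₂, a₃) ∈ [x,y] × [y,z]` to `y ∈ [a₂, a₃]`
  split_ifs <;> simp_all [Finset.mem_product]

theorem mul3_e3_sub_mul3_e3_of_ne {x y z : P} (hxy : x ≤ y) (hyz : y ≤ z) (hxz : x ≠ z) :
    mul3 P R (e3 R ⟨(x, y, y), hxy, le_rfl⟩) (e3 R ⟨(y, y, z), le_rfl, hyz⟩) -
        mul3 P R (e3 R ⟨(y, y, z), le_rfl, hyz⟩) (e3 R ⟨(x, y, y), hxy, le_rfl⟩) =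
      e3 R ⟨(x, y, z), hxy, hyz⟩ := by
  have hne : ¬(y = x ∧ z = y) := fun h => hxz (h.2.trans h.1).symm
  funext ⟨⟨x', y', z'⟩, _, _⟩
  simp only [Pi.sub_apply, mul3_e3_e3_apply, e3_apply, Finset.Icc_self, Finset.mem_singleton,
    Prod.mk.injEq, hne, true_and, false_and, and_false, if_false, sub_zero]
  grind

end IncidenceAlgebra

/-- `J^3_1(P,R)` coincides with the commutator submodule
`[I^3(P,R), I^3(P,R)]`. -/
theorem J3_one_eq_commutator_submodule
    {P R : Type*} [PartialOrder P] [Fintype P] [DecidableEq P] [LocallyFiniteOrder P]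
    [CommRing R] :
    J3 P R 1 = Submodule.span R
      {h : Flag3 P → R | ∃ f g : Flag3 P → R, h = mul3 P R f g - mul3 P R g f} := by
  refine le_antisymm (fun f hf => ?_) (Submodule.span_le.mpr ?_)
  · have := Fintype.ofFinite (Flag3 P)
    rw [pi_eq_sum_univ' f]
    refine Submodule.sum_mem _ fun t _ => ?_
    by_cases hdiag : t.1.1 = t.1.2.2
    · rw [t.eq_diag_of_fst_eq_last hdiag, mem_J3_one_iff.mp hf, zero_smul]
      exact Submodule.zero_mem _
    · obtain ⟨⟨x, y, z⟩, hxy, hyz⟩ := t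
      rw [← e3_eq_single, ← mul3_e3_sub_mul3_e3_of_ne hxy hyz hdiag]
      exact Submodule.smul_mem _ _ (Submodule.subset_span ⟨_, _, rfl⟩)
  · rintro _ ⟨f, g, rfl⟩
    exact mul3_sub_mul3_mem_J3_one f g
end

section
/- Let P be a finite poset and R a commutative unital ring. Set Z^3_1(P,R) = J^3_1(P,R) and Z^3_{i+1}(P,R) = [Z^3_i(P,R), Z^3_i(P,R)]. Then Z^3_3(P,R) = J^3_2(P,R). In particular, Z^3_3(P,R) is an ideal of I^3(P,R). -/
/-- `Z^3_2(P,R) = [J^3_1(P,R), J^3_1(P,R)]`. -/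
def Z3two (P R : Type*) [PartialOrder P] [LocallyFiniteOrder P] [CommRing R] :
    Submodule R (Flag3 P → R) :=
  commSub P R (J3 P R 1) (J3 P R 1)

/-- `Z^3_3(P,R) = [Z^3_2(P,R), Z^3_2(P,R)]`. -/
def Z3three (P R : Type*) [PartialOrder P] [LocallyFiniteOrder P] [CommRing R] :
    Submodule R (Flag3 P → R) :=
  commSub P R (Z3two P R) (Z3two P R)

/-!
Write `e3On a d S` for the sum of the basis elements `e_{(a,u,d)}` over `u ∈ S`. Two such sums
multiply to `e3On a d' [a', d]` when `a' ∈ S`, `d ∈ S'` (and `a ≤ a'`, `d ≤ d'`), and to `0`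
when `a' ∉ S`; so suitable ones have a single nonzero product, and their commutator is again of
this form. Starting from `e_{(x,x,y)}, e_{(x,y,y)} ∈ J¹` this gives `e3On x y [x, y] ∈ Z²` and
`e_{(x,w,z)} ∈ Z²` for `x < w < z`, then `e_{(x,y,z)} ∈ Z³` for `x < y < z`. When `x < w < z`,
the commutators also give `e3On x z [x, w] ∈ Z³`, which is `e_{(x,x,z)}` plus elements already
known to lie in `Z³`, and symmetrically for `e_{(x,z,z)}`. So `J² ⊆ Z³`.

Conversely, `ℓ(x,z) < 2` means `x = z` or `x ⋖ z`, and then `[x, z] = {x, z}`. For `x ⋖ z` the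
commutator of `f, g ∈ J¹` takes the same value `f(x,x,z) g(x,z,z) - g(x,x,z) f(x,z,z)` at
`(x,x,z)` and at `(x,z,z)`. Hence elements of `Z²` take equal values at these two flags, so the
commutator of two of them vanishes there: `Z³ ⊆ J²`. Finally every `J^k` is a two-sided ideal.
-/

open Finset

namespace FlagIncidence

section Length

variable {P : Type*} [PartialOrder P] {x z : P}

theorem natCast_le_ell_iff {n : ℕ} (hn : n ≠ 0) :
    (n : ℕ∞) ≤ ell x z ↔ (n + 1 : ℕ∞) ≤ (Set.Icc x z).chainHeight (· < ·) := by
  rw [ell]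
  induction (Set.Icc x z).chainHeight (· < ·) using ENat.recTopCoe with
  | top => simp
  | coe m => norm_cast; omega

theorem one_le_ell_iff : 1 ≤ ell x z ↔ x < z := by
  rw [← Nat.cast_one, natCast_le_ell_iff one_ne_zero]
  refine ⟨fun h => ?_, fun h => ?_⟩
  · by_contra hxz
    have hsub : Set.Icc x z ⊆ {x} := fun w hw =>
      hw.1.eq_or_lt.elim Eq.symm fun hxw => (hxz (hxw.trans_le hw.2)).elim
    have := (h.trans (Set.chainHeight_le_encard _ _)).trans (Set.encard_le_encard hsub)
    norm_num at this
  · have := Set.encard_le_chainHeight_of_isChain (Set.Icc x z) {x, z}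
      (Set.pair_subset (Set.left_mem_Icc.2 h.le) (Set.right_mem_Icc.2 h.le)) (IsChain.pair h)
    rwa [Set.encard_pair h.ne] at this

theorem two_le_ell_iff : 2 ≤ ell x z ↔ ∃ w, x < w ∧ w < z := by
  rw [← Nat.cast_two, natCast_le_ell_iff two_ne_zero]
  refine ⟨fun h => ?_, fun ⟨w, hxw, hwz⟩ => ?_⟩
  · by_contra! hxz
    have hsub : Set.Icc x z ⊆ {x, z} := fun w hw =>
      hw.1.eq_or_lt.elim (fun h => Or.inl h.symm)
        fun hxw => Or.inr (eq_of_le_of_not_lt hw.2 (hxz w hxw))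
    have := (h.trans (Set.chainHeight_le_encard _ _)).trans
      ((Set.encard_le_encard hsub).trans (Set.encard_insert_le _ _))
    norm_num at this
  · have hxz := (hxw.trans hwz).le
    have hchain : IsChain (· < ·) ({x, w, z} : Set P) := (IsChain.pair hwz).insert
      fun b hb _ => Or.inl (hb.elim (fun h => h ▸ hxw) fun h => (h : b = z) ▸ hxw.trans hwz)
    have := Set.encard_le_chainHeight_of_isChain (Set.Icc x z) {x, w, z}
      (Set.insert_subset (Set.left_mem_Icc.2 hxz)
        (Set.pair_subset ⟨hxw.le, hwz.le⟩ (Set.right_mem_Icc.2 hxz))) hchain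
    rw [Set.encard_insert_of_notMem (by simp [hxw.ne, (hxw.trans hwz).ne]),
      Set.encard_pair hwz.ne] at this
    exact le_trans (by norm_num) this

theorem ell_lt_two_iff_wcovBy (h : x ≤ z) : ell x z < 2 ↔ x ⩿ z := by
  simp [← not_le, two_le_ell_iff, WCovBy, h]

theorem ell_mono {x' z' : P} (hx : x' ≤ x) (hz : z ≤ z') : ell x z ≤ ell x' z' :=
  tsub_le_tsub_right (Set.chainHeight_mono _ _ _ (Set.Icc_subset_Icc hx hz)) 1

end Length

section Extend

variable {P R : Type*} [PartialOrder P] [Zero R]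

open Classical in
/-- Extension by zero to all triples; it lets `mul3` be written as a plain double sum. -/
noncomputable def extendFlag (f : Flag3 P → R) (s : P × P × P) : R :=
  if h : s.1 ≤ s.2.1 ∧ s.2.1 ≤ s.2.2 then f ⟨s, h⟩ else 0

theorem extendFlag_of_le (f : Flag3 P → R) {s : P × P × P} (h : s.1 ≤ s.2.1 ∧ s.2.1 ≤ s.2.2) :
    extendFlag f s = f ⟨s, h⟩ :=
  dif_pos h

end Extend

section Basis

variable {P R : Type*} [PartialOrder P] [CommRing R]

theorem apply_eq_zero_of_mem_J3_one {f : Flag3 P → R} (hf : f ∈ J3 P R 1) {t : Flag3 P}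
    (h : t.1.1 = t.1.2.2) : f t = 0 :=
  hf t (by rw [h, Nat.cast_one, ← not_le, one_le_ell_iff]; exact lt_irrefl _)

variable (P R) in
def coverSymmetric : Submodule R (Flag3 P → R) where
  carrier := {f | ∀ ⦃x z : P⦄ (h : x ⋖ z), f ⟨(x, x, z), le_rfl, h.le⟩ = f ⟨(x, z, z), h.le, le_rfl⟩}
  add_mem' hf hg x z h := by simp only [Pi.add_apply, hf h, hg h]
  zero_mem' _ _ _ := rfl
  smul_mem' c f hf x z h := by simp only [Pi.smul_apply, hf h]

variable [DecidableEq P]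

def e3On (a d : P) (s : Finset P) : Flag3 P → R := fun t =>
  if t.1.1 = a ∧ t.1.2.2 = d ∧ t.1.2.1 ∈ s then 1 else 0

theorem extendFlag_e3On (a d : P) (s : Finset P) {x u v : P} (h : x ≤ u ∧ u ≤ v) :
    extendFlag (e3On a d s : Flag3 P → R) (x, u, v) =
      if x = a ∧ v = d ∧ u ∈ s then 1 else 0 := by
  rw [extendFlag_of_le _ h]
  rfl

theorem e3On_eq_sum (a d : P) (s : Finset P) :
    (e3On a d s : Flag3 P → R) = ∑ u ∈ s, e3On a d {u} := by
  funext ⟨⟨x, y, z⟩, _⟩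
  simp only [e3On, Finset.sum_apply, mem_singleton]
  by_cases h : x = a ∧ z = d
  · simp [h]
  · rw [if_neg fun h' => h ⟨h'.1, h'.2.1⟩]
    exact (sum_eq_zero fun u _ => if_neg fun h' => h ⟨h'.1, h'.2.1⟩).symm

theorem e3On_cons (a d u : P) (s : Finset P) (hu : u ∉ s) :
    (e3On a d (s.cons u hu) : Flag3 P → R) = e3On a d {u} + e3On a d s := by
  rw [e3On_eq_sum, sum_cons, ← e3On_eq_sum]

theorem e3On_mem_of_forall {S : Submodule R (Flag3 P → R)} {a d : P} {s : Finset P}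
    (h : ∀ u ∈ s, e3On a d {u} ∈ S) : e3On a d s ∈ S := by
  rw [e3On_eq_sum]
  exact S.sum_mem h

theorem single_one_eq_e3On {x y z : P} (h : x ≤ y ∧ y ≤ z) :
    Pi.single (⟨(x, y, z), h⟩ : Flag3 P) (1 : R) = e3On x z {y} := by
  funext ⟨⟨a, b, c⟩, _⟩
  simp only [Pi.single_apply, e3On, Subtype.mk.injEq, Prod.mk.injEq, mem_singleton]
  congr 1
  exact propext (by tauto)

theorem e3On_mem_J3 {k : ℕ} {a d : P} (h : k ≤ ell a d) (s : Finset P) :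
    (e3On a d s : Flag3 P → R) ∈ J3 P R k := by
  intro t ht
  refine if_neg fun ⟨ha, hd, _⟩ => ?_
  rw [ha, hd] at ht
  exact ht.not_ge h

end Basis

section Multiplication

variable {P R : Type*} [PartialOrder P] [LocallyFiniteOrder P] [CommRing R]

theorem mul3_apply (f g : Flag3 P → R) (t : Flag3 P) :
    mul3 P R f g t = ∑ u ∈ Icc t.1.1 t.1.2.1, ∑ v ∈ Icc t.1.2.1 t.1.2.2,
      extendFlag f (t.1.1, u, v) * extendFlag g (u, v, t.1.2.2) := by
  rw [← sum_product', ← sum_attach, mul3]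
  refine sum_congr rfl fun p _ => ?_
  obtain ⟨hu, hv⟩ := mem_product.mp p.2
  rw [mem_Icc] at hu hv
  rw [extendFlag_of_le _ ⟨hu.1, hu.2.trans hv.1⟩, extendFlag_of_le _ ⟨hu.2.trans hv.1, hv.2⟩]

theorem mul3_mem_J3_of_left_mem {k : ℕ} {f : Flag3 P → R} (hf : f ∈ J3 P R k)
    (g : Flag3 P → R) : mul3 P R f g ∈ J3 P R k := by
  intro t ht
  rw [mul3_apply]
  refine sum_eq_zero fun u hu => sum_eq_zero fun v hv => mul_eq_zero_of_left ?_ _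
  rw [mem_Icc] at hu hv
  rw [extendFlag_of_le _ ⟨hu.1, hu.2.trans hv.1⟩]
  exact hf _ ((ell_mono le_rfl hv.2).trans_lt ht)

theorem mul3_mem_J3_of_right_mem {k : ℕ} {f : Flag3 P → R} (hf : f ∈ J3 P R k)
    (g : Flag3 P → R) : mul3 P R g f ∈ J3 P R k := by
  intro t ht
  rw [mul3_apply]
  refine sum_eq_zero fun u hu => sum_eq_zero fun v hv => mul_eq_zero_of_right _ ?_
  rw [mem_Icc] at hu hv
  rw [extendFlag_of_le _ ⟨hu.2.trans hv.1, hv.2⟩]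
  exact hf _ ((ell_mono hu.1 le_rfl).trans_lt ht)

theorem commSub_le_J3 {k : ℕ} {U : Submodule R (Flag3 P → R)} (hU : U ≤ J3 P R k)
    (V : Submodule R (Flag3 P → R)) : commSub P R U V ≤ J3 P R k := by
  refine Submodule.span_le.mpr ?_
  rintro _ ⟨f, hf, g, -, rfl⟩
  exact sub_mem (mul3_mem_J3_of_left_mem (hU hf) g) (mul3_mem_J3_of_right_mem (hU hf) g)

theorem mul3_apply_left_of_covBy {f : Flag3 P → R} (hf : f ∈ J3 P R 1) (g : Flag3 P → R)
    {x z : P} (h : x ⋖ z) :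
    mul3 P R f g ⟨(x, x, z), le_rfl, h.le⟩ =
      f ⟨(x, x, z), le_rfl, h.le⟩ * g ⟨(x, z, z), h.le, le_rfl⟩ := by
  classical
  have hIcc : Icc x z = {x, z} := by rw [← coe_inj, coe_Icc, h.Icc_eq, coe_pair]
  rw [mul3_apply]
  dsimp only
  rw [Icc_self, sum_singleton, hIcc, sum_pair h.ne, extendFlag_of_le _ ⟨le_rfl, le_rfl⟩,
    extendFlag_of_le _ ⟨le_rfl, h.le⟩, extendFlag_of_le _ ⟨le_rfl, h.le⟩,
    extendFlag_of_le _ ⟨h.le, le_rfl⟩,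
    apply_eq_zero_of_mem_J3_one (t := ⟨(x, x, x), le_rfl, le_rfl⟩) hf rfl, zero_mul, zero_add]

theorem mul3_apply_right_of_covBy (f : Flag3 P → R) {g : Flag3 P → R} (hg : g ∈ J3 P R 1)
    {x z : P} (h : x ⋖ z) :
    mul3 P R f g ⟨(x, z, z), h.le, le_rfl⟩ =
      f ⟨(x, x, z), le_rfl, h.le⟩ * g ⟨(x, z, z), h.le, le_rfl⟩ := by
  classical
  have hIcc : Icc x z = {x, z} := by rw [← coe_inj, coe_Icc, h.Icc_eq, coe_pair]
  rw [mul3_apply]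
  dsimp only
  rw [Icc_self, hIcc, sum_pair h.ne, sum_singleton, sum_singleton,
    extendFlag_of_le _ ⟨le_rfl, h.le⟩, extendFlag_of_le _ ⟨h.le, le_rfl⟩,
    extendFlag_of_le _ ⟨h.le, le_rfl⟩, extendFlag_of_le _ ⟨le_rfl, le_rfl⟩,
    apply_eq_zero_of_mem_J3_one (t := ⟨(z, z, z), le_rfl, le_rfl⟩) hg rfl, mul_zero, add_zero]

theorem commutator_apply_left_of_covBy {f g : Flag3 P → R} (hf : f ∈ J3 P R 1)
    (hg : g ∈ J3 P R 1) {x z : P} (h : x ⋖ z) :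
    (mul3 P R f g - mul3 P R g f) ⟨(x, x, z), le_rfl, h.le⟩ =
      f ⟨(x, x, z), le_rfl, h.le⟩ * g ⟨(x, z, z), h.le, le_rfl⟩ -
        g ⟨(x, x, z), le_rfl, h.le⟩ * f ⟨(x, z, z), h.le, le_rfl⟩ := by
  rw [Pi.sub_apply, mul3_apply_left_of_covBy hf g h, mul3_apply_left_of_covBy hg f h]

theorem commutator_apply_right_of_covBy {f g : Flag3 P → R} (hf : f ∈ J3 P R 1)
    (hg : g ∈ J3 P R 1) {x z : P} (h : x ⋖ z) :
    (mul3 P R f g - mul3 P R g f) ⟨(x, z, z), h.le, le_rfl⟩ =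
      f ⟨(x, x, z), le_rfl, h.le⟩ * g ⟨(x, z, z), h.le, le_rfl⟩ -
        g ⟨(x, x, z), le_rfl, h.le⟩ * f ⟨(x, z, z), h.le, le_rfl⟩ := by
  rw [Pi.sub_apply, mul3_apply_right_of_covBy f hg h, mul3_apply_right_of_covBy g hf h]

theorem Z3two_le_J3_one : Z3two P R ≤ J3 P R 1 :=
  commSub_le_J3 le_rfl _

theorem Z3two_le_coverSymmetric : Z3two P R ≤ coverSymmetric P R := by
  refine Submodule.span_le.mpr ?_
  rintro _ ⟨f, hf, g, hg, rfl⟩ x z h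
  rw [commutator_apply_left_of_covBy hf hg h, commutator_apply_right_of_covBy hf hg h]

theorem Z3three_le_J3_two : Z3three P R ≤ J3 P R 2 := by
  refine Submodule.span_le.mpr ?_
  rintro _ ⟨f, hf, g, hg, rfl⟩ ⟨⟨x, y, z⟩, hxy, hyz⟩ ht
  dsimp only at hxy hyz ht
  have hJ : mul3 P R f g - mul3 P R g f ∈ J3 P R 1 :=
    commSub_le_J3 Z3two_le_J3_one _ (Submodule.subset_span ⟨f, hf, g, hg, rfl⟩)
  have hwcov : x ⩿ z := (ell_lt_two_iff_wcovBy (hxy.trans hyz)).1 (by exact_mod_cast ht)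
  rcases wcovBy_iff_eq_or_covBy.1 hwcov with hxz | hxz
  · exact apply_eq_zero_of_mem_J3_one hJ hxz
  have hf' := Z3two_le_coverSymmetric hf hxz
  have hg' := Z3two_le_coverSymmetric hg hxz
  rcases hwcov.eq_or_eq hxy hyz with rfl | rfl
  · rw [commutator_apply_left_of_covBy (Z3two_le_J3_one hf) (Z3two_le_J3_one hg) hxz, hf', hg',
      mul_comm, sub_self]
  · rw [commutator_apply_right_of_covBy (Z3two_le_J3_one hf) (Z3two_le_J3_one hg) hxz, hf', hg',
      mul_comm, sub_self]

variable [DecidableEq P]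

theorem mul3_e3On_eq_zero (a d d' : P) {a' : P} {s : Finset P} (h : a' ∉ s) (s' : Finset P) :
    mul3 P R (e3On a d s) (e3On a' d' s') = 0 := by
  funext ⟨⟨x, y, z⟩, hxy, hyz⟩
  rw [mul3_apply]
  refine sum_eq_zero fun u hu => sum_eq_zero fun v hv => ?_
  rw [mem_Icc] at hu hv
  rw [extendFlag_e3On _ _ _ ⟨hu.1, hu.2.trans hv.1⟩, extendFlag_e3On _ _ _ ⟨hu.2.trans hv.1, hv.2⟩]
  split_ifs <;> simp_all

theorem mul3_e3On {a d a' d' : P} {s s' : Finset P} (ha : a ≤ a') (hd : d ≤ d') (ha' : a' ∈ s)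
    (hd' : d ∈ s') :
    mul3 P R (e3On a d s) (e3On a' d' s') = e3On a d' (Icc a' d) := by
  funext ⟨⟨x, y, z⟩, hxy, hyz⟩
  rw [mul3_apply]
  have hterm : ∀ u ∈ Icc x y, ∀ v ∈ Icc y z, extendFlag (e3On a d s : Flag3 P → R) (x, u, v) *
      extendFlag (e3On a' d' s') (u, v, z) =
        if a' = u then if d = v then if x = a ∧ z = d' then 1 else 0 else 0 else 0 := by
    intro u hu v hv
    rw [mem_Icc] at hu hv
    rw [extendFlag_e3On _ _ _ ⟨hu.1, hu.2.trans hv.1⟩, extendFlag_e3On _ _ _ ⟨hu.2.trans hv.1, hv.2⟩]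
    rcases eq_or_ne a' u with rfl | hau
    · rcases eq_or_ne d v with rfl | hdv
      · simp [ha', hd', ← ite_and, and_comm]
      · simp [hdv, Ne.symm hdv]
    · simp [hau, Ne.symm hau]
  rw [sum_congr rfl fun u hu => sum_congr rfl (hterm u hu)]
  simp only [sum_ite_irrel, sum_ite_eq, sum_const_zero]
  unfold e3On
  split_ifs <;> simp_all

theorem e3On_mem_commSub {U V : Submodule R (Flag3 P → R)} {a d a' d' : P} {s s' : Finset P}
    (hU : e3On a d s ∈ U) (hV : e3On a' d' s' ∈ V) (ha : a ≤ a') (hd : d ≤ d') (ha' : a' ∈ s)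
    (hd' : d ∈ s') (has' : a ∉ s') : e3On a d' (Icc a' d) ∈ commSub P R U V := by
  have : mul3 P R (e3On a d s) (e3On a' d' s') - mul3 P R (e3On a' d' s') (e3On a d s) ∈
      commSub P R U V := Submodule.subset_span ⟨_, hU, _, hV, rfl⟩
  rwa [mul3_e3On ha hd ha' hd', mul3_e3On_eq_zero _ _ _ has', sub_zero] at this

theorem e3On_Icc_mem_Z3two {x y : P} (h : x < y) : e3On x y (Icc x y) ∈ Z3two P R := by
  have hJ : ((1 : ℕ) : ℕ∞) ≤ ell x y := by exact_mod_cast one_le_ell_iff.2 h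
  exact e3On_mem_commSub (e3On_mem_J3 hJ {x}) (e3On_mem_J3 hJ {y}) le_rfl le_rfl
    (mem_singleton_self x) (mem_singleton_self y) (by simpa using h.ne)

theorem e3On_singleton_mem_Z3two {x w z : P} (hxw : x < w) (hwz : w < z) :
    e3On x z {w} ∈ Z3two P R := by
  have hxw' : ((1 : ℕ) : ℕ∞) ≤ ell x w := by exact_mod_cast one_le_ell_iff.2 hxw
  have hwz' : ((1 : ℕ) : ℕ∞) ≤ ell w z := by exact_mod_cast one_le_ell_iff.2 hwz
  rw [← Icc_self w]
  exact e3On_mem_commSub (e3On_mem_J3 hxw' {w}) (e3On_mem_J3 hwz' {w}) hxw.le hwz.le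
    (mem_singleton_self w) (mem_singleton_self w) (by simpa using hxw.ne)

theorem e3On_singleton_mem_Z3three {x y z : P} (hxy : x < y) (hyz : y < z) :
    e3On x z {y} ∈ Z3three P R := by
  rw [← Icc_self y]
  exact e3On_mem_commSub (e3On_Icc_mem_Z3two hxy) (e3On_Icc_mem_Z3two hyz) hxy.le hyz.le
    (right_mem_Icc.2 hxy.le) (left_mem_Icc.2 hyz.le) (by simp [hxy.not_ge])

theorem e3On_left_mem_Z3three {x w z : P} (hxw : x < w) (hwz : w < z) :
    e3On x z {x} ∈ Z3three P R := by
  have hIcc : e3On x z (Icc x w) ∈ Z3three P R :=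
    e3On_mem_commSub (e3On_Icc_mem_Z3two hxw) (e3On_singleton_mem_Z3two hxw hwz) le_rfl hwz.le
      (left_mem_Icc.2 hxw.le) (mem_singleton_self w) (by simpa using hxw.ne)
  have hIoc : e3On x z (Ioc x w) ∈ Z3three P R := e3On_mem_of_forall fun u hu =>
    e3On_singleton_mem_Z3three (mem_Ioc.1 hu).1 ((mem_Ioc.1 hu).2.trans_lt hwz)
  rw [Icc_eq_cons_Ioc hxw.le, e3On_cons] at hIcc
  exact (Submodule.add_mem_iff_left _ hIoc).1 hIcc

theorem e3On_right_mem_Z3three {x w z : P} (hxw : x < w) (hwz : w < z) :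
    e3On x z {z} ∈ Z3three P R := by
  have hIcc : e3On x z (Icc w z) ∈ Z3three P R :=
    e3On_mem_commSub (e3On_singleton_mem_Z3two hxw hwz) (e3On_Icc_mem_Z3two hwz) hxw.le le_rfl
      (mem_singleton_self w) (right_mem_Icc.2 hwz.le) (by simp [hxw.not_ge])
  have hIco : e3On x z (Ico w z) ∈ Z3three P R := e3On_mem_of_forall fun u hu =>
    e3On_singleton_mem_Z3three (hxw.trans_le (mem_Ico.1 hu).1) (mem_Ico.1 hu).2
  rw [Icc_eq_cons_Ico hwz.le, e3On_cons] at hIcc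
  exact (Submodule.add_mem_iff_left _ hIco).1 hIcc

theorem e3On_singleton_mem_Z3three_of_two_le_ell {x y z : P} (h : 2 ≤ ell x z) (hxy : x ≤ y)
    (hyz : y ≤ z) : e3On x z {y} ∈ Z3three P R := by
  obtain ⟨w, hxw, hwz⟩ := two_le_ell_iff.1 h
  rcases hxy.eq_or_lt with rfl | hxy
  · exact e3On_left_mem_Z3three hxw hwz
  rcases hyz.eq_or_lt with rfl | hyz
  · exact e3On_right_mem_Z3three hxw hwz
  exact e3On_singleton_mem_Z3three hxy hyz

theorem J3_two_le_Z3three [Finite P] : J3 P R 2 ≤ Z3three P R := by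
  have := Fintype.ofFinite (Flag3 P)
  intro f hf
  rw [pi_eq_sum_univ' f]
  refine Submodule.sum_mem _ fun ⟨(x, y, z), hxy, hyz⟩ _ => ?_
  rcases lt_or_ge (ell x z) 2 with h | h
  · rw [hf _ (by exact_mod_cast h), zero_smul]
    exact zero_mem _
  · rw [single_one_eq_e3On]
    exact Submodule.smul_mem _ _ (e3On_singleton_mem_Z3three_of_two_le_ell h hxy hyz)

end Multiplication

end FlagIncidence

open FlagIncidence

theorem Z3_three_eq_J3_two_general
    {P R : Type*} [PartialOrder P] [Fintype P] [LocallyFiniteOrder P]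
    [CommRing R] :
    Z3three P R = J3 P R 2 ∧
    (∀ f g : Flag3 P → R, f ∈ Z3three P R →
      mul3 P R f g ∈ Z3three P R ∧ mul3 P R g f ∈ Z3three P R) := by
  classical
  have hZ : Z3three P R = J3 P R 2 := le_antisymm Z3three_le_J3_two J3_two_le_Z3three
  refine ⟨hZ, fun f g hf => ?_⟩
  rw [hZ] at hf ⊢
  exact ⟨mul3_mem_J3_of_left_mem hf g, mul3_mem_J3_of_right_mem hf g⟩

/-- `Z^3_3(P,R) = J^3_2(P,R)`; in particular `Z^3_3(P,R)` is an ideal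
of `I^3(P,R)`. -/
theorem Z3_three_eq_J3_two
    {P R : Type*} [PartialOrder P] [Fintype P] [DecidableEq P] [LocallyFiniteOrder P]
    [CommRing R] :
    Z3three P R = J3 P R 2 ∧
    (∀ f g : Flag3 P → R, f ∈ Z3three P R →
      mul3 P R f g ∈ Z3three P R ∧ mul3 P R g f ∈ Z3three P R) :=
  Z3_three_eq_J3_two_general
end
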